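/- arXiv:1007.0797 — 3 statements merged into one kernel-verified Lean document; each statement's English description precedes it below -/
import Mathlib

section
/- Let G be a finite vertex-transitive graph and A an independent set with |A|·|V(G)| = α(G)·|N[A]|. Then for every maximum independent set S of G, |S ∩ N[A]| = |A|; in particular, A ⊆ S for some maximum independent set S. -/
open Finset SimpleGraph

variable {α β : Type*}

/-- The direct (tensor) product of two simple graphs. -/
def tensorProd (G : SimpleGraph α) (H : SimpleGraph β) : SimpleGraph (α × β) where
  Adj x y := G.Adj x.1 y.1 ∧ H.Adj x.2 y.2
  symm := ⟨fun _ _ h => ⟨h.1.symm, h.2.symm⟩⟩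
  loopless := ⟨fun x h => G.irrefl h.1⟩

/-- A set of vertices is independent iff it is a clique in the complement. -/
def IsIndepSet (G : SimpleGraph α) (s : Set α) : Prop := Gᶜ.IsClique s

/-- The independence number: the clique number of the complement. -/
noncomputable def indepNum (G : SimpleGraph α) : ℕ := Gᶜ.cliqueNum

/-- A graph is vertex-transitive if its automorphism group acts transitively. -/
def VertexTransitive (G : SimpleGraph α) : Prop := ∀ u v : α, ∃ φ : G ≃g G, φ u = v

/-- The closed neighborhood of a set of vertices. -/
def closedNbhd (G : SimpleGraph α) (A : Set α) : Set α :=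
  A ∪ {b | ∃ a ∈ A, G.Adj a b}

/-!
Every automorphism `φ` maps a maximum independent set `S` to another one, and exchanging
`φ S ∩ N[A]` for `A` keeps `φ S` independent, so `|A| ≤ |φ S ∩ N[A]|`. By transitivity each
pair `(s, x)` satisfies `φ s = x` for exactly `|Aut G| / |V|` automorphisms, so the average of
`|φ S ∩ N[A]|` over `Aut G` is `|S| |N[A]| / |V| = |A|`. Hence equality holds for every `φ`, in
particular for `φ = id`, and the exchange applied to `S` yields a maximum independent set
containing `A`.
-/

open scoped Pointwise

namespace MulAction

variable {Γ X : Type*} [Group Γ] [MulAction Γ X] [Fintype Γ] [Fintype X] [IsPretransitive Γ X]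

lemma card_filter_smul_eq_mul_card [DecidableEq X] (a b : X) :
    #{g : Γ | g • a = b} * Fintype.card X = Fintype.card Γ := by
  have hfiber (b' : X) : #{g : Γ | g • a = b'} = #{g : Γ | g • a = b} := by
    obtain ⟨h, hh⟩ := exists_smul_eq Γ b' b
    refine card_bij' (fun g _ => h * g) (fun g _ => h⁻¹ * g) ?_ ?_ ?_ ?_ <;>
      simp_all [mul_smul, smul_eq_iff_eq_inv_smul]
  calc #{g : Γ | g • a = b} * Fintype.card X
      = ∑ b' : X, #{g : Γ | g • a = b'} := by simp [hfiber, mul_comm]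
    _ = Fintype.card Γ := (card_eq_sum_card_fiberwise fun g _ => mem_univ (g • a)).symm

lemma sum_ncard_smul_inter_mul_card (S N : Set X) :
    (∑ g : Γ, (g • S ∩ N).ncard) * Fintype.card X =
      Fintype.card Γ * S.ncard * N.ncard := by
  classical
  have hcount (g : Γ) : (g • S ∩ N).ncard =
      ∑ s ∈ S.toFinset, ∑ x ∈ N.toFinset, if g • s = x then 1 else 0 := by
    simp only [sum_ite_eq, ← card_filter]
    rw [← Set.ncard_smul_set g⁻¹, Set.smul_set_inter, inv_smul_smul,
      Set.ncard_eq_toFinset_card']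
    congr 1
    ext s
    simp [mem_inv_smul_finset_iff]
  have hswap : ∑ g : Γ, (g • S ∩ N).ncard =
      ∑ s ∈ S.toFinset, ∑ x ∈ N.toFinset, #{g : Γ | g • s = x} := by
    simp only [hcount, card_filter]
    exact sum_comm.trans (sum_congr rfl fun s _ => sum_comm)
  calc (∑ g : Γ, (g • S ∩ N).ncard) * Fintype.card X
      = ∑ s ∈ S.toFinset, ∑ x ∈ N.toFinset, #{g : Γ | g • s = x} * Fintype.card X := by
        simp only [hswap, sum_mul]
    _ = ∑ s ∈ S.toFinset, ∑ x ∈ N.toFinset, Fintype.card Γ :=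
        sum_congr rfl fun s _ => sum_congr rfl fun x _ => card_filter_smul_eq_mul_card s x
    _ = Fintype.card Γ * S.ncard * N.ncard := by
        simp only [sum_const, smul_eq_mul, Set.ncard_eq_toFinset_card']
        ring

end MulAction

lemma Set.ncard_diff_union_add_ncard_inter {X : Type*} [Finite X] {S A N : Set X} (hAN : A ⊆ N) :
    (S \ N ∪ A).ncard + (S ∩ N).ncard = S.ncard + A.ncard := by
  have hdisj : Disjoint (S \ N) A := Set.disjoint_left.2 fun _ hx hA => hx.2 (hAN hA)
  rw [Set.ncard_union_eq hdisj, ← Set.ncard_inter_add_ncard_sdiff_eq_ncard S N]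
  ring

lemma subset_closedNbhd (G : SimpleGraph α) (A : Set α) : A ⊆ closedNbhd G A :=
  Set.subset_union_left

section IndepSet

variable {G : SimpleGraph α}

lemma IsIndepSet.image_iso {H : SimpleGraph β} (φ : G ≃g H) {S : Set α}
    (hS : _root_.IsIndepSet G S) : _root_.IsIndepSet H (φ '' S) := by
  rintro _ ⟨a, ha, rfl⟩ _ ⟨b, hb, rfl⟩ hne
  refine (compl_adj _ _ _).2 ⟨hne, fun h => ?_⟩
  exact (hS ha hb (ne_of_apply_ne φ hne)).2 (φ.map_adj_iff.1 h)

lemma IsIndepSet.ncard_le_indepNum [Finite α] {S : Set α} (hS : _root_.IsIndepSet G S) :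
    S.ncard ≤ _root_.indepNum G := by
  have hfin := S.toFinite
  rw [Set.ncard_eq_toFinset_card S hfin]
  exact IsClique.card_le_cliqueNum (tc := by rwa [Set.Finite.coe_toFinset])

lemma exists_isIndepSet_ncard_eq_indepNum [Finite α] :
    ∃ S : Set α, _root_.IsIndepSet G S ∧ S.ncard = _root_.indepNum G := by
  obtain ⟨s, hs⟩ := Gᶜ.exists_isNClique_cliqueNum
  exact ⟨s, hs.isClique, by rw [Set.ncard_coe_finset]; exact hs.card_eq⟩

lemma IsIndepSet.diff_closedNbhd_union {S A : Set α} (hS : _root_.IsIndepSet G S)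
    (hA : _root_.IsIndepSet G A) : _root_.IsIndepSet G (S \ closedNbhd G A ∪ A) := by
  intro x hx y hy hxy
  refine (compl_adj _ _ _).2 ⟨hxy, fun hadj => ?_⟩
  rcases hx with hx | hx <;> rcases hy with hy | hy
  · exact (hS hx.1 hy.1 hxy).2 hadj
  · exact hx.2 (Or.inr ⟨y, hy, hadj.symm⟩)
  · exact hy.2 (Or.inr ⟨x, hx, hadj⟩)
  · exact (hA hx hy hxy).2 hadj

lemma IsIndepSet.ncard_le_ncard_inter_closedNbhd [Finite α] {A S : Set α}
    (hA : _root_.IsIndepSet G A) (hS : _root_.IsIndepSet G S)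
    (hSmax : S.ncard = _root_.indepNum G) : A.ncard ≤ (S ∩ closedNbhd G A).ncard := by
  have hexchange := (hS.diff_closedNbhd_union hA).ncard_le_indepNum
  have hsplit := Set.ncard_diff_union_add_ncard_inter (S := S) (subset_closedNbhd G A)
  omega

end IndepSet

lemma VertexTransitive.isPretransitive {G : SimpleGraph α} (hG : VertexTransitive G) :
    MulAction.IsPretransitive (G ≃g G) α :=
  ⟨hG⟩

lemma VertexTransitive.ncard_inter_closedNbhd_eq [Fintype α] {G : SimpleGraph α}
    (hG : VertexTransitive G) {A S : Set α} (hA : _root_.IsIndepSet G A)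
    (heq : A.ncard * Fintype.card α = _root_.indepNum G * (closedNbhd G A).ncard)
    (hS : _root_.IsIndepSet G S) (hSmax : S.ncard = _root_.indepNum G) :
    (S ∩ closedNbhd G A).ncard = A.ncard := by
  cases isEmpty_or_nonempty α
  · simp [Set.eq_empty_of_isEmpty]
  have := hG.isPretransitive
  have : Finite (G ≃g G) := Finite.of_injective _ RelIso.toEquiv_injective
  let : Fintype (G ≃g G) := Fintype.ofFinite _
  have hlow (φ : G ≃g G) : A.ncard ≤ (φ • S ∩ closedNbhd G A).ncard :=
    hA.ncard_le_ncard_inter_closedNbhd (hS.image_iso φ) (by rw [Set.ncard_smul_set, hSmax])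
  have hsum :
      ∑ φ : G ≃g G, A.ncard = ∑ φ : G ≃g G, (φ • S ∩ closedNbhd G A).ncard := by
    refine Nat.eq_of_mul_eq_mul_right (Fintype.card_pos (α := α)) ?_
    rw [MulAction.sum_ncard_smul_inter_mul_card, sum_const, card_univ, smul_eq_mul, hSmax,
      mul_assoc, mul_assoc, heq]
  simpa using ((sum_eq_sum_iff_of_le fun φ _ => hlow φ).1 hsum 1 (mem_univ _)).symm

theorem stmt3 [Fintype α] (G : SimpleGraph α) (hG : VertexTransitive G)
    (A : Set α) (hA : _root_.IsIndepSet G A)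
    (heq : A.ncard * Fintype.card α = _root_.indepNum G * (closedNbhd G A).ncard) :
    (∀ S : Set α, _root_.IsIndepSet G S → S.ncard = _root_.indepNum G →
      (S ∩ closedNbhd G A).ncard = A.ncard) ∧
    ∃ S : Set α, _root_.IsIndepSet G S ∧ S.ncard = _root_.indepNum G ∧ A ⊆ S := by
  refine ⟨fun S hS hSmax => hG.ncard_inter_closedNbhd_eq hA heq hS hSmax, ?_⟩
  obtain ⟨S, hS, hSmax⟩ := exists_isIndepSet_ncard_eq_indepNum (G := G)
  have hinter := hG.ncard_inter_closedNbhd_eq hA heq hS hSmax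
  have hcard := Set.ncard_diff_union_add_ncard_inter (S := S) (subset_closedNbhd G A)
  exact ⟨S \ closedNbhd G A ∪ A, hS.diff_closedNbhd_union hA, by omega,
    Set.subset_union_right⟩
end

section
/- Let G be a finite connected vertex-transitive bipartite graph with at least one edge. Then G has no imprimitive independent set; that is, every independent set A with |A|·|V(G)| = α(G)·|N[A]| satisfies |A| = α(G). -/
open Finset SimpleGraph

variable {α β : Type*}

/-! A vertex-transitive graph is `d`-regular, with `d > 0` as soon as it has an edge. Double
counting the edges between a vertex set `S` and its neighbourhood `N(S)` gives `|S| ≤ |N(S)|`; for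
independent `S` the two sets are disjoint, so `2α ≤ n`, while the two colour classes of a bipartite
graph give `n ≤ 2α`. With `n = 2α` the hypothesis on `A` reads `2|A| = |A| + |N(A)|`, so
`|N(A)| = |A|`. In this equality case no vertex of `N(A)` has a neighbour outside `A`; thus
`A ∪ N(A)` is closed under adjacency and, `G` being connected, is all of `V(G)`. Hence
`2α = n = |A| + |N(A)| = 2|A|`. -/

theorem VertexTransitive.degree_eq {G : SimpleGraph α} [G.LocallyFinite]
    (hG : VertexTransitive G) (u v : α) : G.degree u = G.degree v := by
  obtain ⟨φ, rfl⟩ := hG u v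
  rw [← G.card_neighborSet_eq_degree, ← G.card_neighborSet_eq_degree]
  exact Fintype.card_congr (φ.mapNeighborSet u)

namespace SimpleGraph

variable {G : SimpleGraph α}

theorem Reachable.mem_of_adj_closed {U : Set α} (hU : ∀ ⦃u v⦄, G.Adj u v → u ∈ U → v ∈ U)
    {u v : α} (h : G.Reachable u v) (hu : u ∈ U) : v ∈ U := by
  obtain ⟨p⟩ := h
  induction p with
  | nil => exact hu
  | cons hadj _ ih => exact ih (hU hadj hu)

theorem Colorable.card_le_mul_indepNum [Fintype α] {k : ℕ} (hG : G.Colorable k) :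
    Fintype.card α ≤ k * G.indepNum := by
  classical
  obtain ⟨C⟩ := hG
  have hclass : ∀ i : Fin k, #{v | C v = i} ≤ G.indepNum := fun i =>
    IsIndepSet.card_le_indepNum (by simpa [Coloring.colorClass] using C.isIndepSet_colorClass i)
  simpa [mul_comm] using card_le_mul_card_image_of_maps_to (s := univ) (t := univ)
    (f := C) (fun _ _ => mem_univ _) _ fun i _ => hclass i

section Nbhd

variable [Fintype α] [DecidableRel G.Adj] {d : ℕ}

theorem bipartiteBelow_subset_neighborFinset (S : Finset α) (v : α) :
    S.bipartiteBelow G.Adj v ⊆ G.neighborFinset v := fun _ ha =>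
  (mem_neighborFinset ..).2 (mem_bipartiteBelow _ |>.1 ha).2.symm

variable [DecidableEq α]

variable (G) in
def nbhdFinset (S : Finset α) : Finset α := S.biUnion fun v => G.neighborFinset v

@[simp]
theorem mem_nbhdFinset {S : Finset α} {v : α} : v ∈ G.nbhdFinset S ↔ ∃ a ∈ S, G.Adj a v := by
  simp [nbhdFinset]

theorem bipartiteAbove_nbhdFinset {S : Finset α} {a : α} (ha : a ∈ S) :
    (G.nbhdFinset S).bipartiteAbove G.Adj a = G.neighborFinset a := by
  ext v
  simp only [mem_bipartiteAbove, mem_nbhdFinset, mem_neighborFinset]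
  exact ⟨And.right, fun h => ⟨⟨a, ha, h⟩, h⟩⟩

theorem IsRegularOfDegree.card_bipartiteAbove_nbhdFinset (hreg : G.IsRegularOfDegree d)
    {S : Finset α} {a : α} (ha : a ∈ S) : #((G.nbhdFinset S).bipartiteAbove G.Adj a) = d := by
  rw [bipartiteAbove_nbhdFinset ha, card_neighborFinset_eq_degree, hreg a]

theorem IsRegularOfDegree.card_le_card_nbhdFinset (hreg : G.IsRegularOfDegree d) (hd : d ≠ 0)
    (S : Finset α) : #S ≤ #(G.nbhdFinset S) := by
  refine Nat.le_of_mul_le_mul_right (card_mul_le_card_mul G.Adj (m := d) (n := d)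
    (fun _ ha => (hreg.card_bipartiteAbove_nbhdFinset ha).ge) fun v _ => ?_)
    (Nat.pos_of_ne_zero hd)
  exact (card_le_card (bipartiteBelow_subset_neighborFinset S v)).trans (hreg v).le

/-- The `d * #S` edges leaving `S` all end in `N(S)`, whose vertices have degree `d`; if
`#N(S) = #S`, each vertex of `N(S)` must therefore take all of its edges from `S`. -/
theorem IsRegularOfDegree.neighborFinset_subset_of_card_nbhdFinset_eq
    (hreg : G.IsRegularOfDegree d) {S : Finset α} (h : #(G.nbhdFinset S) = #S) {v : α}
    (hv : v ∈ G.nbhdFinset S) : G.neighborFinset v ⊆ S := by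
  have hle : ∀ w ∈ G.nbhdFinset S, #(S.bipartiteBelow G.Adj w) ≤ d := fun w _ =>
    (card_le_card (bipartiteBelow_subset_neighborFinset S w)).trans (hreg w).le
  have hsum : ∑ w ∈ G.nbhdFinset S, #(S.bipartiteBelow G.Adj w) =
      ∑ _w ∈ G.nbhdFinset S, d := by
    rw [← sum_card_bipartiteAbove_eq_sum_card_bipartiteBelow,
      sum_congr rfl fun _ ha => hreg.card_bipartiteAbove_nbhdFinset ha, sum_const, sum_const, h]
  have hcard : #(G.neighborFinset v) ≤ #(S.bipartiteBelow G.Adj v) := by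
    rw [(sum_eq_sum_iff_of_le hle).1 hsum v hv, card_neighborFinset_eq_degree, hreg v]
  rw [← eq_of_subset_of_card_le (bipartiteBelow_subset_neighborFinset S v) hcard]
  exact filter_subset _ _

theorem IsRegularOfDegree.union_nbhdFinset_eq_univ (hreg : G.IsRegularOfDegree d)
    (hconn : G.Connected) {S : Finset α} (hS : S.Nonempty) (h : #(G.nbhdFinset S) = #S) :
    S ∪ G.nbhdFinset S = univ := by
  obtain ⟨a, ha⟩ := hS
  have hclosed : ∀ ⦃u v⦄, G.Adj u v → u ∈ S ∪ G.nbhdFinset S → v ∈ S ∪ G.nbhdFinset S := by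
    intro u v huv hu
    rcases mem_union.1 hu with hu | hu
    · exact mem_union_right _ (mem_nbhdFinset.2 ⟨u, hu, huv⟩)
    · exact mem_union_left _
        (hreg.neighborFinset_subset_of_card_nbhdFinset_eq h hu ((mem_neighborFinset ..).2 huv))
  exact eq_univ_of_forall fun v => (hconn a v).mem_of_adj_closed hclosed (mem_union_left _ ha)

theorem disjoint_nbhdFinset {S : Finset α} (hS : G.IsIndepSet S) :
    Disjoint S (G.nbhdFinset S) := by
  refine Finset.disjoint_left.2 fun v hv hvN => ?_
  obtain ⟨a, ha, hav⟩ := mem_nbhdFinset.1 hvN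
  exact hS ha hv hav.ne hav

theorem IsRegularOfDegree.two_mul_indepNum_le (hreg : G.IsRegularOfDegree d) (hd : d ≠ 0) :
    2 * G.indepNum ≤ Fintype.card α := by
  obtain ⟨S, hS⟩ := G.exists_isNIndepSet_indepNum
  calc 2 * G.indepNum = #S + #S := by rw [hS.card_eq, two_mul]
    _ ≤ #S + #(G.nbhdFinset S) := Nat.add_le_add_left (hreg.card_le_card_nbhdFinset hd S) _
    _ = #(S ∪ G.nbhdFinset S) := (card_union_of_disjoint (disjoint_nbhdFinset hS.isIndepSet)).symm
    _ ≤ Fintype.card α := card_le_univ _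

theorem closedNbhd_coe (S : Finset α) :
    closedNbhd G (S : Set α) = ↑(S ∪ G.nbhdFinset S) := by
  ext v
  simp [closedNbhd]

end Nbhd

end SimpleGraph

theorem stmt9 [Fintype α] (G : SimpleGraph α) (hG : VertexTransitive G)
    (hconn : G.Connected) (hbip : G.Colorable 2) (hE : G.edgeSet.Nonempty)
    (A : Set α) (hA : _root_.IsIndepSet G A) (hAne : A.Nonempty)
    (heq : A.ncard * Fintype.card α = _root_.indepNum G * (closedNbhd G A).ncard) :
    A.ncard = _root_.indepNum G := by
  classical
  lift A to Finset α using A.toFinite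
  obtain ⟨a, ha⟩ := hAne
  have hreg : G.IsRegularOfDegree (G.degree a) := fun v => hG.degree_eq v a
  have hd : G.degree a ≠ 0 := by
    obtain ⟨⟨u, v⟩, huv⟩ := hE
    rw [← hG.degree_eq u a]
    exact ((G.degree_pos_iff_exists_adj u).2 ⟨v, huv⟩).ne'
  have hAindep : G.IsIndepSet A := (isClique_compl G).1 hA
  have hα : _root_.indepNum G = G.indepNum := cliqueNum_compl
  have hcard : Fintype.card α = 2 * G.indepNum :=
    (hreg.two_mul_indepNum_le hd).antisymm' hbip.card_le_mul_indepNum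
  have hpos : 0 < G.indepNum := (card_pos.2 ⟨a, ha⟩).trans_le hAindep.card_le_indepNum
  rw [closedNbhd_coe, Set.ncard_coe_finset, Set.ncard_coe_finset,
    card_union_of_disjoint (disjoint_nbhdFinset hAindep), hα, hcard] at heq
  have hN : #(G.nbhdFinset A) = #A := Nat.eq_of_mul_eq_mul_left hpos (by linarith)
  have huniv := congrArg card (hreg.union_nbhdFinset_eq_univ hconn ⟨a, ha⟩ hN)
  rw [card_union_of_disjoint (disjoint_nbhdFinset hAindep), card_univ, hcard, hN] at huniv
  rw [Set.ncard_coe_finset, hα]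
  omega
end

section
/- Let G and H be finite graphs such that the direct product G × H satisfies α(G × H) = α(H)·|V(G)|, and suppose H is disconnected with vertex set partitioned into two nonempty unions of components V₁ and V₂. If I₁ and I₂ are distinct maximum independent sets of G, then S = (I₁ × V₁) ∪ (I₂ × V₂) is a maximum independent set of G × H that is not of the form I × V(H) or V(G) × J. -/
open Finset SimpleGraph

variable {α β : Type*}

/-- A set of vertices is independent iff it is a clique in the complement. -/
def IsIndepSet' (G : SimpleGraph α) (s : Set α) : Prop := Gᶜ.IsClique s

/-- The independence number: the clique number of the complement. -/
noncomputable def indepNum' (G : SimpleGraph α) : ℕ := Gᶜ.cliqueNum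

/-!
The product `S = I₁ ×ˢ V₁ ∪ I₂ ×ˢ V₂` is independent because no edge of `H` joins `V₁` to `V₂`,
and it has `α(G) (|V₁| + |V₂|) = α(G) |V(H)|` elements. Its slice over a vertex of `V₁` is `I₁`
and over a vertex of `V₂` is `I₂`. A set `I × V(H)` has all slices equal, and a set `V(G) × J`
has only the slices `∅` and `V(G)`; as `I₁ ≠ I₂` are both nonempty, `S` is of neither form.
-/

lemma IsIndepSet'.not_adj {G : SimpleGraph α} {s : Set α} (h : IsIndepSet' G s)
    {a b : α} (ha : a ∈ s) (hb : b ∈ s) : ¬ G.Adj a b :=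
  fun hadj => (h ha hb hadj.ne).2 hadj

lemma isIndepSet'_tensorProd_union_prod {G : SimpleGraph α} {H : SimpleGraph β}
    {I₁ I₂ : Set α} {V₁ V₂ : Set β} (hI₁ : IsIndepSet' G I₁) (hI₂ : IsIndepSet' G I₂)
    (hsep : ∀ v ∈ V₁, ∀ w ∈ V₂, ¬ H.Adj v w) :
    IsIndepSet' (tensorProd G H) (I₁ ×ˢ V₁ ∪ I₂ ×ˢ V₂) := by
  intro x hx y hy hxy
  refine (compl_adj _ _ _).2 ⟨hxy, ?_⟩
  rintro ⟨hG, hH⟩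
  rcases hx with hx | hx <;> rcases hy with hy | hy
  · exact hI₁.not_adj hx.1 hy.1 hG
  · exact hsep x.2 hx.2 y.2 hy.2 hH
  · exact hsep y.2 hy.2 x.2 hx.2 hH.symm
  · exact hI₂.not_adj hx.1 hy.1 hG

lemma ncard_union_prod_of_ncard_eq [Finite α] [Finite β] {I₁ I₂ : Set α} {V₁ V₂ : Set β}
    (hV : Disjoint V₁ V₂) (hI : I₁.ncard = I₂.ncard) :
    (I₁ ×ˢ V₁ ∪ I₂ ×ˢ V₂).ncard = I₁.ncard * (V₁ ∪ V₂).ncard := by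
  have hdisj : Disjoint (I₁ ×ˢ V₁) (I₂ ×ˢ V₂) := Set.disjoint_prod.2 (Or.inr hV)
  rw [Set.ncard_union_eq hdisj, Set.ncard_union_eq hV, Set.ncard_prod, Set.ncard_prod, hI,
    mul_add]

lemma preimage_prodMk_union_prod_of_mem_left {I₁ I₂ : Set α} {V₁ V₂ : Set β} {v : β}
    (hV : Disjoint V₁ V₂) (hv : v ∈ V₁) :
    (fun a => (a, v)) ⁻¹' (I₁ ×ˢ V₁ ∪ I₂ ×ˢ V₂) = I₁ := by
  rw [Set.preimage_union, Set.mk_preimage_prod_left hv,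
    Set.mk_preimage_prod_left_eq_empty (Set.disjoint_left.1 hV hv), Set.union_empty]

lemma preimage_prodMk_union_prod_of_mem_right {I₁ I₂ : Set α} {V₁ V₂ : Set β} {v : β}
    (hV : Disjoint V₁ V₂) (hv : v ∈ V₂) :
    (fun a => (a, v)) ⁻¹' (I₁ ×ˢ V₁ ∪ I₂ ×ˢ V₂) = I₂ := by
  rw [Set.union_comm]
  exact preimage_prodMk_union_prod_of_mem_left hV.symm hv

lemma union_prod_ne_prod_univ {I₁ I₂ I : Set α} {V₁ V₂ : Set β} (hV : Disjoint V₁ V₂)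
    (h₁ : V₁.Nonempty) (h₂ : V₂.Nonempty) (hne : I₁ ≠ I₂) :
    I₁ ×ˢ V₁ ∪ I₂ ×ˢ V₂ ≠ I ×ˢ Set.univ := by
  obtain ⟨v₁, hv₁⟩ := h₁
  obtain ⟨v₂, hv₂⟩ := h₂
  intro h
  have e₁ := preimage_prodMk_union_prod_of_mem_left (I₁ := I₁) (I₂ := I₂) hV hv₁
  have e₂ := preimage_prodMk_union_prod_of_mem_right (I₁ := I₁) (I₂ := I₂) hV hv₂
  rw [h, Set.mk_preimage_prod_left (Set.mem_univ _)] at e₁ e₂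
  exact hne (e₁.symm.trans e₂)

lemma union_prod_ne_univ_prod {I₁ I₂ : Set α} {V₁ V₂ J : Set β}
    (hV : Disjoint V₁ V₂) (h₁ : V₁.Nonempty) (h₂ : V₂.Nonempty)
    (hI₁ : I₁.Nonempty) (hI₂ : I₂.Nonempty) (hne : I₁ ≠ I₂) :
    I₁ ×ˢ V₁ ∪ I₂ ×ˢ V₂ ≠ Set.univ ×ˢ J := by
  have slice_eq_univ : ∀ {v : β} {I : Set α}, I.Nonempty →
      (fun a => (a, v)) ⁻¹' (Set.univ ×ˢ J) = I → I = Set.univ := by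
    intro v I hI hslice
    by_cases hv : v ∈ J
    · rwa [Set.mk_preimage_prod_left hv, eq_comm] at hslice
    · rw [Set.mk_preimage_prod_left_eq_empty hv] at hslice
      exact absurd hslice.symm hI.ne_empty
  obtain ⟨v₁, hv₁⟩ := h₁
  obtain ⟨v₂, hv₂⟩ := h₂
  intro h
  have e₁ := preimage_prodMk_union_prod_of_mem_left (I₁ := I₁) (I₂ := I₂) hV hv₁
  have e₂ := preimage_prodMk_union_prod_of_mem_right (I₁ := I₁) (I₂ := I₂) hV hv₂
  rw [h] at e₁ e₂
  exact hne ((slice_eq_univ hI₁ e₁).trans (slice_eq_univ hI₂ e₂).symm)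

lemma Set.nonempty_of_ncard_eq_of_ne [Finite α] {s t : Set α} (hst : s.ncard = t.ncard)
    (hne : s ≠ t) : s.Nonempty := by
  rw [Set.nonempty_iff_ne_empty]
  rintro rfl
  rw [Set.ncard_empty, eq_comm, Set.ncard_eq_zero] at hst
  exact hne hst.symm

theorem stmt15 [Fintype α] [Fintype β] (G : SimpleGraph α) (H : SimpleGraph β)
    (hα : indepNum' (tensorProd G H) = indepNum' G * Fintype.card β)
    (V₁ V₂ : Set β) (hunion : V₁ ∪ V₂ = Set.univ) (hdisj : Disjoint V₁ V₂)
    (h1ne : V₁.Nonempty) (h2ne : V₂.Nonempty)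
    (hsep : ∀ v ∈ V₁, ∀ w ∈ V₂, ¬ H.Adj v w)
    (I₁ I₂ : Set α) (hI₁ : IsIndepSet' G I₁) (hI₂ : IsIndepSet' G I₂)
    (hc₁ : I₁.ncard = indepNum' G) (hc₂ : I₂.ncard = indepNum' G)
    (hne : I₁ ≠ I₂) :
    IsIndepSet' (tensorProd G H) (I₁ ×ˢ V₁ ∪ I₂ ×ˢ V₂) ∧
    (I₁ ×ˢ V₁ ∪ I₂ ×ˢ V₂).ncard = indepNum' (tensorProd G H) ∧
    (¬ ∃ I : Set α, I₁ ×ˢ V₁ ∪ I₂ ×ˢ V₂ = I ×ˢ (Set.univ : Set β)) ∧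
    (¬ ∃ J : Set β, I₁ ×ˢ V₁ ∪ I₂ ×ˢ V₂ = (Set.univ : Set α) ×ˢ J) := by
  have hc : I₁.ncard = I₂.ncard := hc₁.trans hc₂.symm
  refine ⟨isIndepSet'_tensorProd_union_prod hI₁ hI₂ hsep, ?_,
    fun ⟨I, h⟩ => union_prod_ne_prod_univ hdisj h1ne h2ne hne h,
    fun ⟨J, h⟩ => union_prod_ne_univ_prod hdisj h1ne h2ne
      (Set.nonempty_of_ncard_eq_of_ne hc hne) (Set.nonempty_of_ncard_eq_of_ne hc.symm hne.symm)
      hne h⟩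
  rw [ncard_union_prod_of_ncard_eq hdisj hc, hunion, Set.ncard_univ, Nat.card_eq_fintype_card,
    hc₁, hα]
end
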